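/- Let A be a signed graph on n vertices and let 1 ≤ k ≤ n−1. Then complementation of subsets is an isomorphism between the underlying graphs of ∧^k A and ∧^{n−k} A: for all k-element subsets S, T of Fin n, (∧^k A)(S,T) ≠ 0 if and only if (∧^{n−k} A)(Sᶜ, Tᶜ) ≠ 0, where Sᶜ denotes the complement of S in Fin n. -/

import Mathlib

open Matrix Finset

def IsSignedMatrix {ι : Type*} (B : Matrix ι ι ℝ) : Prop :=
  B.IsSymm ∧ (∀ i, B i i = 0) ∧ ∀ i j, B i j = -1 ∨ B i j = 0 ∨ B i j = 1

def IsBalancedMatrix {ι : Type*} [Fintype ι] (B : Matrix ι ι ℝ) : Prop :=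
  ∃ D : Matrix ι ι ℝ, D.IsDiag ∧ (∀ i, D i i = 1 ∨ D i i = -1) ∧
    D * B * D = Matrix.of fun i j => |B i j|

def cartPow {n : ℕ} (A : Matrix (Fin n) (Fin n) ℝ) (k : ℕ) :
    Matrix (Fin k → Fin n) (Fin k → Fin n) ℝ :=
  Matrix.of fun u v => ∑ i : Fin k, A (u i) (v i) *
    ∏ j ∈ Finset.univ.erase i, (if u j = v j then (1 : ℝ) else 0)

noncomputable def enumOf {n k : ℕ} (r : LinearOrder (Fin n)) (S : Finset (Fin n))
    (h : S.card = k) : Fin k → Fin n :=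
  fun i => ((@Finset.orderIsoOfFin (Fin n) r S k h) i : Fin n)

noncomputable def altOf {n : ℕ} (k : ℕ) (r : LinearOrder (Fin n)) :
    Matrix (Fin k → Fin n) {S : Finset (Fin n) // S.card = k} ℝ :=
  Matrix.of fun u S =>
    (Real.sqrt (Nat.factorial k))⁻¹ *
      ∑ π : Equiv.Perm (Fin k),
        if u = enumOf r S.1 S.2 ∘ π then ((Equiv.Perm.sign π : ℤ) : ℝ) else 0

noncomputable def alt (n k : ℕ) :
    Matrix (Fin k → Fin n) {S : Finset (Fin n) // S.card = k} ℝ :=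
  altOf k inferInstance

noncomputable def extPow {n : ℕ} (A : Matrix (Fin n) (Fin n) ℝ) (k : ℕ) :
    Matrix {S : Finset (Fin n) // S.card = k} {S : Finset (Fin n) // S.card = k} ℝ :=
  (alt n k)ᵀ * cartPow A k * alt n k

def IsPathMatrix {n : ℕ} (A : Matrix (Fin n) (Fin n) ℝ) : Prop :=
  ∃ g : Equiv.Perm (Fin n), ∀ i j : Fin n,
    |A (g i) (g j)| = 1 ↔ ((i : ℤ) - j = 1 ∨ (j : ℤ) - i = 1)

def IsCycleMatrix {n : ℕ} (A : Matrix (Fin n) (Fin n) ℝ) : Prop :=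
  3 ≤ n ∧ ∃ g : Equiv.Perm (Fin n), ∀ i j : Fin n,
    |A (g i) (g j)| = 1 ↔
      ((i : ℤ) - j ≡ 1 [ZMOD (n : ℤ)] ∨ (i : ℤ) - j ≡ -1 [ZMOD (n : ℤ)])

def signedAdjGraph {n : ℕ} (A : Matrix (Fin n) (Fin n) ℝ) : SimpleGraph (Fin n) :=
  SimpleGraph.fromRel (fun u v => |A u v| = 1)

section lemmas
variable {n k : ℕ}

noncomputable def en (S : {S : Finset (Fin n) // S.card = k}) : Fin k → Fin n :=
  enumOf inferInstance S.1 S.2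

lemma en_mem (S : {S : Finset (Fin n) // S.card = k}) (i : Fin k) : en S i ∈ S.1 :=
  (S.1.orderIsoOfFin S.2 i).2

lemma en_inj (S : {S : Finset (Fin n) // S.card = k}) : Function.Injective (en S) :=
  fun _ _ h => (S.1.orderIsoOfFin S.2).injective (Subtype.ext h)

lemma en_image (S : {S : Finset (Fin n) // S.card = k}) :
    Finset.image (en S) Finset.univ = S.1 := by
  apply Finset.eq_of_subset_of_card_le
  · intro x hx
    simp only [Finset.mem_image] at hx
    obtain ⟨i, _, rfl⟩ := hx
    exact en_mem S i
  · rw [Finset.card_image_of_injective _ (en_inj S), Finset.card_univ, Fintype.card_fin, S.2]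

lemma en_surj (S : {S : Finset (Fin n) // S.card = k}) {a : Fin n} (ha : a ∈ S.1) :
    ∃ i, en S i = a := by
  have := (en_image S) ▸ ha
  simpa [Finset.mem_image] using this

lemma sum_if_perm (c : ℝ) (f : Equiv.Perm (Fin k) → (Fin k → Fin n))
    (s : Equiv.Perm (Fin k) → ℝ) (g : (Fin k → Fin n) → ℝ) :
    ∑ u : Fin k → Fin n, (c * ∑ π : Equiv.Perm (Fin k), if u = f π then s π else 0) * g u =
      c * ∑ π : Equiv.Perm (Fin k), s π * g (f π) := by
  simp_rw [mul_assoc, Finset.sum_mul, ite_mul, zero_mul, ← Finset.mul_sum]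
  congr 1
  rw [Finset.sum_comm]
  apply Finset.sum_congr rfl
  intro π _
  rw [Finset.sum_ite_eq' Finset.univ (f π) (fun u => s π * g u), if_pos (Finset.mem_univ _)]

lemma sum_alt (S : {S : Finset (Fin n) // S.card = k}) (g : (Fin k → Fin n) → ℝ) :
    ∑ u, alt n k u S * g u =
      (Real.sqrt (Nat.factorial k))⁻¹ *
        ∑ π : Equiv.Perm (Fin k), ((Equiv.Perm.sign π : ℤ) : ℝ) * g (en S ∘ π) := by
  exact
    sum_if_perm (Real.sqrt (Nat.factorial k))⁻¹ (fun π => en S ∘ π)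
      (fun π => ((Equiv.Perm.sign π : ℤ) : ℝ)) g

lemma extPow_eq (A : Matrix (Fin n) (Fin n) ℝ) (S T : {S : Finset (Fin n) // S.card = k}) :
    extPow A k S T = ((Nat.factorial k : ℝ))⁻¹ *
      ∑ σ : Equiv.Perm (Fin k), ∑ π : Equiv.Perm (Fin k),
        ((Equiv.Perm.sign σ : ℤ) : ℝ) * (((Equiv.Perm.sign π : ℤ) : ℝ) *
          cartPow A k (en S ∘ π) (en T ∘ σ)) := by
  have h1 : extPow A k S T = ∑ v, alt n k v T * (∑ u, alt n k u S * cartPow A k u v) := by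
    simp only [extPow, Matrix.mul_apply, Matrix.transpose_apply]
    apply Finset.sum_congr rfl
    intro v _
    rw [mul_comm]
  rw [h1]
  rw [sum_alt T (fun v => ∑ u, alt n k u S * cartPow A k u v)]
  have h2 : ∀ σ : Equiv.Perm (Fin k),
      (∑ u, alt n k u S * cartPow A k u (en T ∘ σ)) =
      (Real.sqrt (Nat.factorial k))⁻¹ *
        ∑ π : Equiv.Perm (Fin k), ((Equiv.Perm.sign π : ℤ) : ℝ) *
          cartPow A k (en S ∘ π) (en T ∘ σ) := fun σ =>
    sum_alt S (fun u => cartPow A k u (en T ∘ σ))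
  simp_rw [h2]
  have hc : (Real.sqrt (Nat.factorial k))⁻¹ * (Real.sqrt (Nat.factorial k))⁻¹
      = ((Nat.factorial k : ℝ))⁻¹ := by
    rw [← mul_inv, Real.mul_self_sqrt (by positivity)]
  rw [← hc]
  simp_rw [Finset.mul_sum]
  apply Finset.sum_congr rfl
  intro σ _
  apply Finset.sum_congr rfl
  intro π _
  ring

end lemmas

section main
variable {n k : ℕ} {A : Matrix (Fin n) (Fin n) ℝ}

lemma perm_eq_of_eq_off (π σ : Equiv.Perm (Fin k)) (i : Fin k)
    (h : ∀ j, j ≠ i → π j = σ j) : π = σ := by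
  have hi : π i = σ i := by
    by_contra hne
    set m := σ⁻¹ (π i) with hm
    have hσm : σ m = π i := σ.apply_symm_apply _
    have hmi : m ≠ i := fun e => hne (by rw [← hσm, e])
    exact hmi (π.injective (by rw [h m hmi, hσm]))
  apply Equiv.ext
  intro j
  by_cases hj : j = i
  · subst hj; exact hi
  · exact h j hj

lemma erase_eq_of (S T : {S : Finset (Fin n) // S.card = k}) (π σ : Equiv.Perm (Fin k))
    (i : Fin k) (h : ∀ j ∈ Finset.univ.erase i, en S (π j) = en T (σ j)) :
    S.1.erase (en S (π i)) = T.1.erase (en T (σ i)) := by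
  have key : ∀ (U : {S : Finset (Fin n) // S.card = k}) (τ : Equiv.Perm (Fin k)),
      Finset.image (fun j => en U (τ j)) (Finset.univ.erase i) = U.1.erase (en U (τ i)) := by
    intro U τ
    have h1 : Finset.image (fun j => en U (τ j)) (Finset.univ.erase i)
        = Finset.image (en U) (Finset.image τ (Finset.univ.erase i)) := by
      rw [Finset.image_image]; rfl
    rw [h1, Finset.image_erase τ.injective, Finset.image_univ_equiv,
      Finset.image_erase (en_inj U), en_image]
  rw [← key S π, ← key T σ]
  exact Finset.image_congr h

lemma extPow_eq_zero_of_not (S T : {S : Finset (Fin n) // S.card = k})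
    (hno : ¬ ∃ a ∈ S.1, ∃ b ∈ T.1, S.1.erase a = T.1.erase b ∧ A a b ≠ 0) :
    extPow A k S T = 0 := by
  rw [extPow_eq]
  have hz : ∀ σ π : Equiv.Perm (Fin k), cartPow A k (en S ∘ π) (en T ∘ σ) = 0 := by
    intro σ π
    simp only [cartPow, Matrix.of_apply, Function.comp_apply]
    apply Finset.sum_eq_zero
    intro i _
    by_cases hprod : (∏ j ∈ Finset.univ.erase i,
        (if en S (π j) = en T (σ j) then (1:ℝ) else 0)) = 0
    · rw [hprod, mul_zero]
    · have hall : ∀ j ∈ Finset.univ.erase i, en S (π j) = en T (σ j) := by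
        intro j hj
        by_contra hne
        exact hprod (Finset.prod_eq_zero hj (if_neg hne))
      have hAz : A (en S (π i)) (en T (σ i)) = 0 := by
        by_contra hAne
        exact hno ⟨_, en_mem S (π i), _, en_mem T (σ i), erase_eq_of S T π σ i hall, hAne⟩
      rw [hAz, zero_mul]
  simp [hz]

lemma sign_sq (τ : Equiv.Perm (Fin k)) :
    ((Equiv.Perm.sign τ : ℤ) : ℝ) * ((Equiv.Perm.sign τ : ℤ) : ℝ) = 1 := by
  rcases Int.units_eq_one_or (Equiv.Perm.sign τ) with h | h <;> rw [h] <;> norm_num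

lemma extPow_ne_zero_of (hA : IsSignedMatrix A) (S T : {S : Finset (Fin n) // S.card = k})
    {a b : Fin n} (ha : a ∈ S.1) (hb : b ∈ T.1)
    (hE : S.1.erase a = T.1.erase b) (hab : A a b ≠ 0) : extPow A k S T ≠ 0 := by
  have haneb : a ≠ b := fun h => hab (h ▸ hA.2.1 a)
  have hbS : b ∉ S.1 := by
    intro hbS
    have h1 : b ∈ S.1.erase a := Finset.mem_erase.mpr ⟨haneb.symm, hbS⟩
    rw [hE] at h1
    exact (Finset.mem_erase.mp h1).1 rfl
  obtain ⟨p, hp⟩ := en_surj S ha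
  set g : Fin k → Fin n := Function.update (en S) p b with hgdef
  have hgp : g p = b := Function.update_self p b (en S)
  have hgx : ∀ x, x ≠ p → g x = en S x := fun x hx => Function.update_of_ne hx b (en S)
  have hg_mem : ∀ x, g x ∈ T.1 := by
    intro x
    by_cases hx : x = p
    · subst hx; rw [hgp]; exact hb
    · rw [hgx x hx]
      have hne : en S x ≠ a := by
        intro e; exact hx (en_inj S (by rw [e, hp]))
      have h1 : en S x ∈ S.1.erase a := Finset.mem_erase.mpr ⟨hne, en_mem S x⟩
      rw [hE] at h1
      exact Finset.mem_of_mem_erase h1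
  have hg_inj : Function.Injective g := by
    intro x y hxy
    by_cases hx : x = p <;> by_cases hy : y = p
    · rw [hx, hy]
    · rw [hx, hgp, hgx y hy] at hxy; exact absurd (hxy ▸ en_mem S y) hbS
    · rw [hy, hgp, hgx x hx] at hxy; exact absurd (hxy.symm ▸ en_mem S x) hbS
    · rw [hgx x hx, hgx y hy] at hxy; exact en_inj S hxy
  have hbij : Function.Bijective (fun x : Fin k => (⟨g x, hg_mem x⟩ : {x // x ∈ T.1})) := by
    rw [Fintype.bijective_iff_injective_and_card]
    constructor
    · intro x y hxy
      exact hg_inj (congrArg Subtype.val hxy)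
    · rw [Fintype.card_coe, T.2, Fintype.card_fin]
  let Eg : Fin k ≃ {x // x ∈ T.1} := Equiv.ofBijective _ hbij
  let θ : Equiv.Perm (Fin k) := Eg.trans (T.1.orderIsoOfFin T.2).toEquiv.symm
  have hθ : ∀ x, en T (θ x) = g x := fun x =>
    congrArg Subtype.val ((T.1.orderIsoOfFin T.2).toEquiv.apply_symm_apply (Eg x))
  -- cross terms vanish
  have cross : ∀ π σ : Equiv.Perm (Fin k), σ ≠ π →
      cartPow A k (en S ∘ π) (g ∘ σ) = 0 := by
    intro π σ hne
    simp only [cartPow, Matrix.of_apply, Function.comp_apply]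
    apply Finset.sum_eq_zero
    intro i _
    by_cases hprod : (∏ j ∈ Finset.univ.erase i,
        (if en S (π j) = g (σ j) then (1:ℝ) else 0)) = 0
    · rw [hprod, mul_zero]
    · exfalso
      have hall : ∀ j ∈ Finset.univ.erase i, en S (π j) = g (σ j) := by
        intro j hj
        by_contra hne2
        exact hprod (Finset.prod_eq_zero hj (if_neg hne2))
      have heq : ∀ j, j ≠ i → π j = σ j := by
        intro j hj
        have h1 := hall j (Finset.mem_erase.mpr ⟨hj, Finset.mem_univ j⟩)
        have hσp : σ j ≠ p := by
          intro e
          rw [e, hgp] at h1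
          exact hbS (h1 ▸ en_mem S (π j))
        rw [hgx _ hσp] at h1
        exact en_inj S h1
      exact hne (perm_eq_of_eq_off π σ i heq).symm
  -- diagonal terms
  have diag : ∀ π : Equiv.Perm (Fin k), cartPow A k (en S ∘ π) (g ∘ π) = A a b := by
    intro π
    simp only [cartPow, Matrix.of_apply, Function.comp_apply]
    rw [Finset.sum_eq_single_of_mem (π⁻¹ p) (Finset.mem_univ _)]
    · rw [Equiv.Perm.inv_def, Equiv.apply_symm_apply, hp, hgp, Finset.prod_eq_one, mul_one]
      intro j hj
      have hjp : π j ≠ p := by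
        intro e
        exact (Finset.mem_erase.mp hj).1 (by rw [← e]; simp)
      exact if_pos (hgx _ hjp).symm
    · intro i _ hi
      have hmem : π⁻¹ p ∈ Finset.univ.erase i :=
        Finset.mem_erase.mpr ⟨Ne.symm hi, Finset.mem_univ _⟩
      have hfac : (if en S (π (π⁻¹ p)) = g (π (π⁻¹ p)) then (1:ℝ) else 0) = 0 :=
        if_neg (fun h => haneb (by rwa [Equiv.Perm.inv_def, Equiv.apply_symm_apply, hp, hgp] at h))
      rw [Finset.prod_eq_zero hmem hfac, mul_zero]
  -- now compute
  have hinner : ∀ σ : Equiv.Perm (Fin k),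
      (∑ π : Equiv.Perm (Fin k), ((Equiv.Perm.sign (θ * σ) : ℤ) : ℝ) *
        (((Equiv.Perm.sign π : ℤ) : ℝ) * cartPow A k (en S ∘ π) (en T ∘ ⇑(θ * σ)))) =
      ((Equiv.Perm.sign θ : ℤ) : ℝ) * A a b := by
    intro σ
    have hcomp : en T ∘ ⇑(θ * σ) = g ∘ ⇑σ := funext fun x => hθ (σ x)
    have hsign : ((Equiv.Perm.sign (θ * σ) : ℤ) : ℝ) =
        ((Equiv.Perm.sign θ : ℤ) : ℝ) * ((Equiv.Perm.sign σ : ℤ) : ℝ) := by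
      rw [_root_.map_mul]
      push_cast
      ring
    simp_rw [hcomp, hsign]
    rw [Finset.sum_eq_single_of_mem σ (Finset.mem_univ _)]
    · rw [diag σ, show ((Equiv.Perm.sign θ : ℤ) : ℝ) * ((Equiv.Perm.sign σ : ℤ) : ℝ) *
        (((Equiv.Perm.sign σ : ℤ) : ℝ) * A a b) =
        (((Equiv.Perm.sign σ : ℤ) : ℝ) * ((Equiv.Perm.sign σ : ℤ) : ℝ)) *
          (((Equiv.Perm.sign θ : ℤ) : ℝ) * A a b) from by ring, sign_sq σ, one_mul]
    · intro π _ hπ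
      rw [cross π σ (Ne.symm hπ), mul_zero, mul_zero]
  have htot : (∑ σ : Equiv.Perm (Fin k), ∑ π : Equiv.Perm (Fin k),
      ((Equiv.Perm.sign σ : ℤ) : ℝ) * (((Equiv.Perm.sign π : ℤ) : ℝ) *
        cartPow A k (en S ∘ π) (en T ∘ σ))) =
      (Nat.factorial k : ℝ) * (((Equiv.Perm.sign θ : ℤ) : ℝ) * A a b) := by
    calc (∑ σ : Equiv.Perm (Fin k), ∑ π : Equiv.Perm (Fin k),
        ((Equiv.Perm.sign σ : ℤ) : ℝ) * (((Equiv.Perm.sign π : ℤ) : ℝ) *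
          cartPow A k (en S ∘ π) (en T ∘ σ)))
        = ∑ σ : Equiv.Perm (Fin k), ∑ π : Equiv.Perm (Fin k),
          ((Equiv.Perm.sign (θ * σ) : ℤ) : ℝ) * (((Equiv.Perm.sign π : ℤ) : ℝ) *
            cartPow A k (en S ∘ π) (en T ∘ ⇑(θ * σ))) :=
          (Fintype.sum_equiv (Equiv.mulLeft θ)
            (fun σ => ∑ π : Equiv.Perm (Fin k),
              ((Equiv.Perm.sign (θ * σ) : ℤ) : ℝ) * (((Equiv.Perm.sign π : ℤ) : ℝ) *
                cartPow A k (en S ∘ π) (en T ∘ ⇑(θ * σ))))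
            (fun σ => ∑ π : Equiv.Perm (Fin k),
              ((Equiv.Perm.sign σ : ℤ) : ℝ) * (((Equiv.Perm.sign π : ℤ) : ℝ) *
                cartPow A k (en S ∘ π) (en T ∘ σ))) (fun σ => rfl)).symm
      _ = ∑ _σ : Equiv.Perm (Fin k), ((Equiv.Perm.sign θ : ℤ) : ℝ) * A a b :=
          Finset.sum_congr rfl (fun σ _ => hinner σ)
      _ = (Nat.factorial k : ℝ) * (((Equiv.Perm.sign θ : ℤ) : ℝ) * A a b) := by
          rw [Finset.sum_const, Finset.card_univ, Fintype.card_perm, Fintype.card_fin,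
            nsmul_eq_mul]
  rw [extPow_eq, htot]
  have hsθ : ((Equiv.Perm.sign θ : ℤ) : ℝ) ≠ 0 := by
    rcases Int.units_eq_one_or (Equiv.Perm.sign θ) with h | h <;> rw [h] <;> norm_num
  have hfac : (Nat.factorial k : ℝ) ≠ 0 := Nat.cast_ne_zero.mpr (Nat.factorial_ne_zero k)
  exact mul_ne_zero (inv_ne_zero hfac) (mul_ne_zero hfac (mul_ne_zero hsθ hab))

lemma extPow_ne_zero_iff (hA : IsSignedMatrix A) (S T : {S : Finset (Fin n) // S.card = k}) :
    extPow A k S T ≠ 0 ↔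
      ∃ a ∈ S.1, ∃ b ∈ T.1, S.1.erase a = T.1.erase b ∧ A a b ≠ 0 := by
  constructor
  · intro hne
    by_contra hno
    exact hne (extPow_eq_zero_of_not S T hno)
  · rintro ⟨a, ha, b, hb, hE, hab⟩
    exact extPow_ne_zero_of hA S T ha hb hE hab

end main

section glue
variable {n k : ℕ} {A : Matrix (Fin n) (Fin n) ℝ}

lemma cond_compl {S T : Finset (Fin n)} (hA : IsSignedMatrix A)
    (h : ∃ a ∈ S, ∃ b ∈ T, S.erase a = T.erase b ∧ A a b ≠ 0) :
    ∃ a ∈ Sᶜ, ∃ b ∈ Tᶜ, Sᶜ.erase a = Tᶜ.erase b ∧ A a b ≠ 0 := by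
  obtain ⟨a, ha, b, hb, hE, hab⟩ := h
  have haneb : a ≠ b := fun h => hab (h ▸ hA.2.1 a)
  have hbS : b ∉ S := by
    intro hbS
    have h1 : b ∈ S.erase a := Finset.mem_erase.mpr ⟨haneb.symm, hbS⟩
    rw [hE] at h1
    exact (Finset.mem_erase.mp h1).1 rfl
  have haT : a ∉ T := by
    intro haT
    have h1 : a ∈ T.erase b := Finset.mem_erase.mpr ⟨haneb, haT⟩
    rw [← hE] at h1
    exact (Finset.mem_erase.mp h1).1 rfl
  have hE' : Sᶜ.erase b = Tᶜ.erase a := by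
    ext x
    simp only [Finset.mem_erase, Finset.mem_compl]
    have hx := Finset.ext_iff.mp hE x
    simp only [Finset.mem_erase] at hx
    constructor
    · rintro ⟨hxb, hxS⟩
      exact ⟨fun e => hxS (e ▸ ha), fun hxT => hxS (hx.mpr ⟨hxb, hxT⟩).2⟩
    · rintro ⟨hxa, hxT⟩
      exact ⟨fun e => hxT (e ▸ hb), fun hxS => hxT (hx.mp ⟨hxa, hxS⟩).2⟩
  exact ⟨b, Finset.mem_compl.mpr hbS, a, Finset.mem_compl.mpr haT, hE',
    by rwa [hA.1.apply a b]⟩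

end glue

theorem stmt7 {n k : ℕ} (hk : 1 ≤ k) (hkn : k ≤ n - 1)
    (A : Matrix (Fin n) (Fin n) ℝ) (hA : IsSignedMatrix A)
    (S T : {S : Finset (Fin n) // S.card = k}) :
    extPow A k S T ≠ 0 ↔
      extPow A (n - k) ⟨S.1ᶜ, by simp [Finset.card_compl, S.2]⟩
        ⟨T.1ᶜ, by simp [Finset.card_compl, T.2]⟩ ≠ 0 := by
  rw [extPow_ne_zero_iff hA S T,
    extPow_ne_zero_iff hA ⟨S.1ᶜ, by simp [Finset.card_compl, S.2]⟩
      ⟨T.1ᶜ, by simp [Finset.card_compl, T.2]⟩]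
  constructor
  · exact fun h => cond_compl hA h
  · intro h
    have h2 := cond_compl hA h
    simpa using h2
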